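/- Let M, a, s be positive integers with M > 1 such that ∑_{i=0}^{M-1} (a+i)^2 = s^2, and suppose M = 24·m₁ + 16 for a nonnegative integer m₁. Then: (i) m₁ ≢ 1 (mod 4); (ii) for every even integer α ≥ 4, m₁ ≢ 2·(2^(α-4) − 1)/3 (mod 2^(α-1)); and (iii) for every odd integer α ≥ 5, m₁ ≢ 2·(5·2^(α-4) − 1)/3 (mod 2^(α-1)). (In cases (ii) and (iii) the displayed residues are integers, since 2^(α-4) ≡ 1 (mod 3) for α even and 5·2^(α-4) ≡ 1 (mod 3) for α odd.) -/

import Mathlib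

/-!
With `M = n + 1`, `6 * ∑ (a + i)^2 = M * K` where `K = 6 a (a + n) + n (2n + 1)`. When
`M ≡ 16 (mod 24)`, `a (a + n)` is even and `n ≡ 3 (mod 12)`, so `K = 3w` with `w ≡ 3 (mod 4)`.
If moreover `M = 2^α u` with `u ≡ 1 (mod 4)`, the equation becomes `s^2 = 2^(α-1) u w` with
`u w ≡ 3 (mod 4)`, impossible since the odd part of a square is `1 (mod 4)`. Each excluded residue
class of `m₁ mod 2^(α-1)` is exactly the class `M ≡ 2^α (mod 2^(α+2))`.
-/

open Finset

theorem six_mul_sum_range_succ_add_sq (a n : ℕ) :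
    6 * ∑ i ∈ range (n + 1), (a + i) ^ 2 = (n + 1) * (6 * (a * (a + n)) + n * (2 * n + 1)) := by
  induction n with
  | zero => simp [sq]
  | succ n ih => rw [sum_range_succ, mul_add, ih]; ring

theorem sq_ne_two_pow_mul_of_mod_four_eq_three {v : ℕ} (hv : v % 4 = 3) :
    ∀ k s : ℕ, s ^ 2 ≠ 2 ^ k * v
  | 0, s, h => by
    obtain ⟨t, rfl | rfl⟩ := Nat.even_or_odd' s <;> ring_nf at h <;> omega
  | k + 1, s, h => by
    obtain ⟨t, rfl⟩ : 2 ∣ s := Nat.prime_two.dvd_of_dvd_pow (n := 2) ⟨2 ^ k * v, by rw [h]; ring⟩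
    cases k with
    | zero => ring_nf at h; omega
    | succ k =>
      exact sq_ne_two_pow_mul_of_mod_four_eq_three hv k t (by
        apply Nat.eq_of_mul_eq_mul_left (show 0 < 4 by norm_num)
        rw [show 4 * t ^ 2 = (2 * t) ^ 2 by ring, h]; ring)

theorem exists_eq_two_pow_mul_of_modEq {M α : ℕ} (h : M ≡ 2 ^ α [MOD 2 ^ (α + 2)]) :
    ∃ u, M = 2 ^ α * u ∧ u % 4 = 1 := by
  have hpow : 2 ^ (α + 2) = 2 ^ α * 4 := by rw [pow_add]; norm_num
  refine ⟨4 * (M / 2 ^ (α + 2)) + 1, ?_, by omega⟩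
  have hmod : M % 2 ^ (α + 2) = 2 ^ α := by
    rw [h, Nat.mod_eq_of_lt (by rw [hpow]; have := Nat.two_pow_pos α; omega)]
  calc M = 2 ^ (α + 2) * (M / 2 ^ (α + 2)) + M % 2 ^ (α + 2) := (Nat.div_add_mod _ _).symm
    _ = _ := by rw [hmod, hpow]; ring

theorem sum_range_add_sq_ne_sq (a s : ℕ) {M α : ℕ} (hM : M % 3 = 1) (hα : 2 ≤ α)
    (h : M ≡ 2 ^ α [MOD 2 ^ (α + 2)]) : ∑ i ∈ range M, (a + i) ^ 2 ≠ s ^ 2 := by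
  intro hsum
  obtain ⟨u, hMu, hu⟩ := exists_eq_two_pow_mul_of_modEq h
  obtain ⟨β, rfl⟩ := Nat.exists_eq_add_of_le' hα
  have hM4 : 4 ∣ M := ⟨2 ^ β * u, by rw [hMu, pow_add]; ring⟩
  obtain ⟨n, rfl⟩ : ∃ n, M = n + 1 := ⟨M - 1, by omega⟩
  have hP : a * (a + n) % 2 = 0 := by
    rw [← Nat.even_iff, Nat.even_mul, Nat.even_add, Nat.even_iff, Nat.even_iff]
    omega
  have hX : n * (2 * n + 1) % 12 = 9 := by
    rw [Nat.mul_mod, show n % 12 = 3 by omega, show (2 * n + 1) % 12 = 7 by omega]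
  obtain ⟨w, hw, hw4⟩ : ∃ w, 6 * (a * (a + n)) + n * (2 * n + 1) = 3 * w ∧ w % 4 = 3 :=
    ⟨(6 * (a * (a + n)) + n * (2 * n + 1)) / 3, by omega, by omega⟩
  have huw : u * w % 4 = 3 := by rw [Nat.mul_mod, hu, hw4]
  refine sq_ne_two_pow_mul_of_mod_four_eq_three huw (β + 1) s ?_
  apply Nat.eq_of_mul_eq_mul_left (show 0 < 6 by norm_num)
  rw [← hsum, six_mul_sum_range_succ_add_sq, hw, hMu]
  ring

theorem twentyFour_mul_add_sixteen_modEq_of_modEq {m r α : ℕ} (hα : 1 ≤ α)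
    (h : m ≡ r [MOD 2 ^ (α - 1)]) :
    24 * m + 16 ≡ 24 * r + 16 [MOD 2 ^ (α + 2)] := by
  obtain ⟨β, rfl⟩ := Nat.exists_eq_add_of_le' hα
  exact ((h.mul_left' 24).of_dvd ⟨3, by simp only [Nat.add_sub_cancel, pow_add]; ring⟩).add_right 16

theorem twentyFour_mul_residue_add_sixteen_of_even {α : ℕ} (hα : 4 ≤ α) (he : Even α) :
    24 * (2 * (2 ^ (α - 4) - 1) / 3) + 16 = 2 ^ α := by
  obtain ⟨k, hk⟩ : ∃ k, α = 2 * k + 4 := ⟨α / 2 - 2, by rcases he with ⟨j, rfl⟩; omega⟩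
  have h3 : 2 ^ (2 * k) % 3 = 1 := by rw [pow_mul, Nat.pow_mod]; norm_num
  rw [hk, Nat.add_sub_cancel, pow_add]
  omega

theorem twentyFour_mul_residue_add_sixteen_of_odd {α : ℕ} (hα : 5 ≤ α) (ho : Odd α) :
    24 * (2 * (5 * 2 ^ (α - 4) - 1) / 3) + 16 = 5 * 2 ^ α := by
  obtain ⟨k, hk⟩ : ∃ k, α = 2 * k + 5 := ⟨α / 2 - 2, by rcases ho with ⟨j, rfl⟩; omega⟩
  have h3 : 2 ^ (2 * k) % 3 = 1 := by rw [pow_mul, Nat.pow_mod]; norm_num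
  rw [hk, show 2 * k + 5 - 4 = 2 * k + 1 by omega, pow_add, pow_add]
  omega

theorem stmt_general (M a s m₁ : ℕ)
    (hsum : ∑ i ∈ Finset.range M, (a + i) ^ 2 = s ^ 2)
    (hMeq : M = 24 * m₁ + 16) :
    ¬ m₁ % 4 = 1 ∧
      (∀ α : ℕ, 4 ≤ α → Even α → ¬ m₁ ≡ 2 * (2 ^ (α - 4) - 1) / 3 [MOD 2 ^ (α - 1)]) ∧
      (∀ α : ℕ, 5 ≤ α → Odd α → ¬ m₁ ≡ 2 * (5 * 2 ^ (α - 4) - 1) / 3 [MOD 2 ^ (α - 1)]) := by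
  subst hMeq
  have hM3 : (24 * m₁ + 16) % 3 = 1 := by omega
  refine ⟨fun h => ?_, fun α hα he h => ?_, fun α hα ho h => ?_⟩
  · refine sum_range_add_sq_ne_sq a s hM3 (α := 3) le_add_self ?_ hsum
    unfold Nat.ModEq
    omega
  · refine sum_range_add_sq_ne_sq a s hM3 (α := α) (by omega) ?_ hsum
    simpa only [twentyFour_mul_residue_add_sixteen_of_even hα he] using
      twentyFour_mul_add_sixteen_modEq_of_modEq (by omega) h
  · have key := twentyFour_mul_add_sixteen_modEq_of_modEq (by omega) h
    rw [twentyFour_mul_residue_add_sixteen_of_odd hα ho] at key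
    refine sum_range_add_sq_ne_sq a s hM3 (α := α) (by omega) (key.trans ?_) hsum
    rw [show 5 * 2 ^ α = 2 ^ α + 2 ^ (α + 2) by ring]
    exact Nat.add_modEq_right

theorem stmt (M a s m₁ : ℕ) (hM : 1 < M) (ha : 1 ≤ a) (hs : 1 ≤ s)
    (hsum : ∑ i ∈ Finset.range M, (a + i) ^ 2 = s ^ 2)
    (hMeq : M = 24 * m₁ + 16) :
    ¬ m₁ % 4 = 1 ∧
      (∀ α : ℕ, 4 ≤ α → Even α → ¬ m₁ ≡ 2 * (2 ^ (α - 4) - 1) / 3 [MOD 2 ^ (α - 1)]) ∧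
      (∀ α : ℕ, 5 ≤ α → Odd α → ¬ m₁ ≡ 2 * (5 * 2 ^ (α - 4) - 1) / 3 [MOD 2 ^ (α - 1)]) :=
  stmt_general M a s m₁ hsum hMeq
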